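/- arXiv:1002.0921 — 5 statements merged into one kernel-verified Lean document; each statement's English description precedes it below -/
import Mathlib

section
/- Let S be a d-dimensional polyhedron in ℝ^d with S = {x ∈ ℝ^d : q_1(x) ≥ 0, …, q_m(x) ≥ 0} for real polynomials q_1, …, q_m in d variables, and let F be a nonempty face of S of dimension f. Then at least d − f of the polynomials q_1, …, q_m vanish identically on F; in particular, m ≥ d − f. -/
open MvPolynomial Filter

/-- Evaluation of a `d`-variate real polynomial at a point of `ℝ^d`. -/
noncomputable def pev {d : ℕ} (p : MvPolynomial (Fin d) ℝ) (x : EuclideanSpace ℝ (Fin d)) : ℝ :=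
  MvPolynomial.eval (fun i => x i) p

/-- A basic closed semialgebraic set in `ℝ^d`. -/
def IsBasicClosed {d : ℕ} (S : Set (EuclideanSpace ℝ (Fin d))) : Prop :=
  ∃ (k : ℕ) (q : Fin k → MvPolynomial (Fin d) ℝ), S = {x | ∀ i, 0 ≤ pev (q i) x}

/-- A closed semialgebraic set: a finite union of basic closed semialgebraic sets. -/
def IsClosedSemialg {d : ℕ} (S : Set (EuclideanSpace ℝ (Fin d))) : Prop :=
  ∃ (n : ℕ) (F : Fin n → Set (EuclideanSpace ℝ (Fin d))),
    (∀ i, IsBasicClosed (F i)) ∧ S = ⋃ i, F i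

/-- A polyhedron in `ℝ^d`: an intersection of finitely many closed affine halfspaces. -/
def IsPolyhedron {d : ℕ} (S : Set (EuclideanSpace ℝ (Fin d))) : Prop :=
  ∃ (k : ℕ) (l : Fin k → (EuclideanSpace ℝ (Fin d) →ᵃ[ℝ] ℝ)), S = {x | ∀ i, 0 ≤ l i x}

/-- A face of a polyhedron `S`: either `S` itself, or `S ∩ {ℓ = 0}` for an affine
function `ℓ` that is nonnegative on `S`. -/
def IsFace {d : ℕ} (S F : Set (EuclideanSpace ℝ (Fin d))) : Prop :=
  F = S ∨ ∃ ℓ : EuclideanSpace ℝ (Fin d) →ᵃ[ℝ] ℝ,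
    (∀ x ∈ S, 0 ≤ ℓ x) ∧ F = {x ∈ S | ℓ x = 0}

/-- The dimension of a subset of `ℝ^d`: the dimension of its affine hull. -/
noncomputable def sDim {d : ℕ} (F : Set (EuclideanSpace ℝ (Fin d))) : ℕ :=
  Module.finrank ℝ (affineSpan ℝ F).direction


/-!
Pick a chain of faces `F = G_f ⊂ G_{f+1} ⊂ ⋯ ⊂ G_d = S`, each a facet of the next; facets
exist because an irredundant system of inequalities defining a polyhedron has, for every
inequality that is tight somewhere but not everywhere, a point where it alone is tight.
Every point of a facet `G` of `P` is a limit of points of `aff P` outside `S`, so at each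
point of `G` some `qᵢ` vanishes without vanishing identically on `aff P`. By Baire, one
such `qᵢ` vanishes on a relatively open piece of `G`, hence, being a polynomial, on `aff G`.
The polynomial found for `G_k` vanishes on `G_k` but not on `G_{k+1}`, so these `d - f`
polynomials are distinct, and all of them vanish on `F`.
-/

open Set Topology AffineMap Module

section Affine

variable {E : Type*} [NormedAddCommGroup E] [NormedSpace ℝ E]

theorem eventually_lineMap_mem {A : AffineSubspace ℝ E} {s : Set E} {x y : E}
    (hs : s ∈ 𝓝[A] x) (hx : x ∈ A) (hy : y ∈ A) :
    ∀ᶠ t in 𝓝 (0 : ℝ), lineMap x y t ∈ s := by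
  refine tendsto_nhdsWithin_iff.2 ⟨?_, .of_forall fun t => lineMap_mem t hx hy⟩ hs
  simpa using (lineMap_continuous (p := x) (q := y)).tendsto (0 : ℝ)

theorem Convex.exists_mem_nhdsWithin_affineSpan [FiniteDimensional ℝ E] {s : Set E}
    (hs : Convex ℝ s) (hne : s.Nonempty) : ∃ x ∈ s, s ∈ 𝓝[affineSpan ℝ s] x := by
  obtain ⟨_, ⟨x, hx, rfl⟩⟩ := hne.intrinsicInterior hs
  exact ⟨x, interior_subset (s := Subtype.val ⁻¹' s) hx,
    mem_of_superset (mem_nhds_subtype_iff_nhdsWithin.1 (isOpen_interior.mem_nhds hx))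
      (image_subset_iff.2 interior_subset)⟩

theorem AffineMap.apply_smul_add (g : E →ᵃ[ℝ] ℝ) (t : ℝ) (v y : E) :
    g (t • v + y) = t * g.linear v + g y := by
  rw [← vadd_eq_add, g.map_vadd, map_smul, smul_eq_mul, vadd_eq_add]

theorem AffineMap.apply_lineMap_eq (g : E →ᵃ[ℝ] ℝ) (x y : E) (t : ℝ) :
    g (lineMap x y t) = (1 - t) * g x + t * g y := by
  rw [g.apply_lineMap, lineMap_apply_module, smul_eq_mul, smul_eq_mul]

theorem AffineMap.eq_zero_of_nonneg_of_mem_nhdsWithin {s : Set E} {x₀ : E} (hx₀ : x₀ ∈ s)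
    (hs : s ∈ 𝓝[affineSpan ℝ s] x₀) {g : E →ᵃ[ℝ] ℝ} (hg : ∀ x ∈ s, 0 ≤ g x) (hgx₀ : g x₀ = 0)
    {x : E} (hx : x ∈ s) : g x = 0 := by
  have hev := eventually_lineMap_mem hs (subset_affineSpan ℝ s hx₀) (subset_affineSpan ℝ s hx)
  obtain ⟨t, hts, ht⟩ := ((hev.filter_mono nhdsWithin_le_nhds).and
    (self_mem_nhdsWithin : Iio (0 : ℝ) ∈ 𝓝[<] 0)).exists
  have := hg _ hts
  rw [g.apply_lineMap_eq, hgx₀] at this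
  nlinarith [hg x hx]

theorem mem_direction_affineSpan_of_eventually {s : Set E} {y v : E} (hy : y ∈ s)
    (h : ∀ᶠ t in 𝓝 (0 : ℝ), t • v + y ∈ s) : v ∈ (affineSpan ℝ s).direction := by
  obtain ⟨t, hts, ht⟩ := ((h.filter_mono nhdsWithin_le_nhds).and
    (self_mem_nhdsWithin : {0}ᶜ ∈ 𝓝[≠] (0 : ℝ))).exists
  have hmem := AffineSubspace.vsub_mem_direction (subset_affineSpan ℝ s hts)
    (subset_affineSpan ℝ s hy)
  rw [vsub_eq_sub, add_sub_cancel_right] at hmem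
  exact (Submodule.smul_mem_iff _ ht).1 hmem

theorem subset_closure_affineSpan_diff {P : Set E} {g : E →ᵃ[ℝ] ℝ} (hg : ∀ x ∈ P, 0 ≤ g x)
    {s : E} (hs : s ∈ P) (hgs : g s ≠ 0) :
    {x ∈ P | g x = 0} ⊆ closure ((affineSpan ℝ P : Set E) \ P) := by
  rintro y ⟨hyP, hgy⟩
  have hgs' : 0 < g s := (hg s hs).lt_of_ne' hgs
  refine mem_closure_of_tendsto (b := 𝓝[<] (0 : ℝ)) (f := lineMap y s)
    ((lineMap_continuous.tendsto' 0 y (by simp)).mono_left nhdsWithin_le_nhds) ?_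
  filter_upwards [self_mem_nhdsWithin] with t (ht : t < 0)
  refine ⟨lineMap_mem t (subset_affineSpan ℝ P hyP) (subset_affineSpan ℝ P hs), fun htP => ?_⟩
  have := hg _ htP
  rw [g.apply_lineMap_eq, hgy] at this
  nlinarith

theorem affineSpan_sep_inter_eq {P S : Set E} (hPS : (affineSpan ℝ P : Set E) ∩ S = P)
    (g : E →ᵃ[ℝ] ℝ) : (affineSpan ℝ {x ∈ P | g x = 0} : Set E) ∩ S = {x ∈ P | g x = 0} := by
  refine Subset.antisymm (fun x ⟨hxG, hxS⟩ => ⟨?_, eqOn_affineSpan (g := 0) (fun x hx => hx.2) hxG⟩)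
    fun x hx => ⟨subset_affineSpan ℝ _ hx, (hPS.ge hx.1).2⟩
  exact hPS ▸ ⟨affineSpan_mono ℝ (sep_subset _ _) hxG, hxS⟩

end Affine

theorem Submodule.finrank_inf_ker_add_one {K V : Type*} [Field K] [AddCommGroup V] [Module K V]
    {W : Submodule K V} [FiniteDimensional K W] {φ : V →ₗ[K] K} (h : ¬W ≤ LinearMap.ker φ) :
    finrank K ↥(W ⊓ LinearMap.ker φ) + 1 = finrank K W := by
  have hφ : φ.domRestrict W ≠ 0 := fun h0 =>
    h fun v hv => by simpa using LinearMap.congr_fun h0 ⟨v, hv⟩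
  rw [← Module.Dual.finrank_ker_add_one_of_ne_zero hφ, LinearMap.ker_domRestrict,
    ← Submodule.map_comap_subtype, Submodule.finrank_map_subtype_eq]

theorem nonempty_interior_of_iUnion_mem_nhds {X ι : Type*} [TopologicalSpace X] [BaireSpace X]
    [Countable ι] {C : ι → Set X} (hC : ∀ i, IsClosed (C i)) {u : X} (hu : ⋃ i, C i ∈ 𝓝 u) :
    ∃ i, (interior (C i)).Nonempty := by
  set U := interior (⋃ i, C i)
  have hcover : ⋃ o : Option ι, o.elim Uᶜ C = univ := by
    refine eq_univ_of_forall fun x => ?_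
    by_cases hx : x ∈ U
    · obtain ⟨i, hi⟩ := mem_iUnion.1 (interior_subset hx)
      exact mem_iUnion.2 ⟨some i, hi⟩
    · exact mem_iUnion.2 ⟨none, hx⟩
  have hdense := dense_iUnion_interior_of_closed
    (fun o => o.rec isOpen_interior.isClosed_compl hC) hcover
  obtain ⟨v, hvU, hv⟩ := dense_iff_inter_open.1 hdense U isOpen_interior
    ⟨u, mem_interior_iff_mem_nhds.2 hu⟩
  obtain ⟨_ | i, hi⟩ := mem_iUnion.1 hv
  · exact absurd hvU (interior_subset hi)
  · exact ⟨i, v, hi⟩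

section Polyhedral

variable {E : Type*} [NormedAddCommGroup E] [NormedSpace ℝ E]

def polyhedralSet (L : Finset (E →ᵃ[ℝ] ℝ)) : Set E := {x | ∀ g ∈ L, 0 ≤ g x}

def IsIrredundant (L : Finset (E →ᵃ[ℝ] ℝ)) : Prop :=
  ∀ g ∈ L, ∃ w, (∀ g' ∈ L, g' ≠ g → 0 ≤ g' w) ∧ g w < 0

variable {L : Finset (E →ᵃ[ℝ] ℝ)}

theorem convex_polyhedralSet (L : Finset (E →ᵃ[ℝ] ℝ)) : Convex ℝ (polyhedralSet L) := by
  have : polyhedralSet L = ⋂ g ∈ L, g ⁻¹' Ici 0 := by ext; simp [polyhedralSet]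
  rw [this]
  exact convex_iInter₂ fun g _ => (convex_Ici 0).affine_preimage g

theorem exists_isIrredundant_polyhedralSet_eq (L₀ : Finset (E →ᵃ[ℝ] ℝ)) :
    ∃ L, polyhedralSet L = polyhedralSet L₀ ∧ IsIrredundant L := by
  classical
  obtain ⟨L, hL, hmin⟩ :=
    wellFounded_lt.has_min {L | polyhedralSet L = polyhedralSet L₀} ⟨L₀, rfl⟩
  refine ⟨L, hL, fun g hg => ?_⟩
  by_contra! h
  refine hmin (L.erase g) (Eq.trans ?_ hL) (Finset.erase_ssubset hg)
  refine Subset.antisymm (fun w hw g' hg' => ?_)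
    fun w hw g' hg' => hw g' (Finset.mem_of_mem_erase hg')
  by_cases hgg : g' = g
  · exact hgg ▸ h w fun g'' hg'' hne => hw g'' (Finset.mem_erase.2 ⟨hne, hg''⟩)
  · exact hw g' (Finset.mem_erase.2 ⟨hgg, hg'⟩)

theorem eventually_add_smul_mem_polyhedralSet {y v : E}
    (h : ∀ g ∈ L, 0 < g y ∨ (0 ≤ g y ∧ g.linear v = 0)) :
    ∀ᶠ t in 𝓝 (0 : ℝ), t • v + y ∈ polyhedralSet L := by
  refine (eventually_all_finset L).2 fun g hg => ?_
  simp_rw [g.apply_smul_add]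
  rcases h g hg with hpos | ⟨hnn, hv⟩
  · have : Tendsto (fun t : ℝ => t * g.linear v + g y) (𝓝 0) (𝓝 (g y)) :=
      (by fun_prop : Continuous fun t : ℝ => t * g.linear v + g y).tendsto' 0 _ (by simp)
    exact (this.eventually (lt_mem_nhds hpos)).mono fun t ht => ht.le
  · exact .of_forall fun t => by rwa [hv, mul_zero, zero_add]

theorem exists_tight_of_mem_proper_face {ℓ : E →ᵃ[ℝ] ℝ} (hℓ : ∀ x ∈ polyhedralSet L, 0 ≤ ℓ x)
    {x₀ : E} (hx₀ : x₀ ∈ polyhedralSet L) (hℓx₀ : ℓ x₀ = 0) {x : E} (hx : x ∈ polyhedralSet L)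
    (hℓx : ℓ x ≠ 0) : ∃ g ∈ L, g x₀ = 0 ∧ ∃ s ∈ polyhedralSet L, g s ≠ 0 := by
  by_contra! h
  have hev := eventually_add_smul_mem_polyhedralSet (L := L) (y := x₀) (v := x₀ - x)
    fun g hg => (hx₀ g hg).lt_or_eq.imp_right fun h0 => ⟨h0.le, by
      rw [← vsub_eq_sub, g.linearMap_vsub, h g hg h0.symm x hx, ← h0, vsub_self]⟩
  obtain ⟨t, ht, htpos⟩ := ((hev.filter_mono nhdsWithin_le_nhds).and
    (self_mem_nhdsWithin : Ioi (0 : ℝ) ∈ 𝓝[>] 0)).exists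
  have := hℓ _ ht
  rw [ℓ.apply_smul_add, ← vsub_eq_sub, ℓ.linearMap_vsub, hℓx₀, vsub_eq_sub] at this
  exact hℓx (le_antisymm (by nlinarith) (hℓ x hx))

theorem direction_affineSpan_sep_eq_inf_ker {g : E →ᵃ[ℝ] ℝ} {y : E}
    (hy : y ∈ polyhedralSet L) (hgy : g y = 0)
    (hdich : ∀ g' ∈ L, g' ≠ g → 0 < g' y ∨ ∀ x ∈ polyhedralSet L, g' x = 0) :
    (affineSpan ℝ {x ∈ polyhedralSet L | g x = 0}).direction =
      (affineSpan ℝ (polyhedralSet L)).direction ⊓ LinearMap.ker g.linear := by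
  refine le_antisymm
    (le_inf (AffineSubspace.direction_le (affineSpan_mono ℝ (sep_subset _ _))) ?_) ?_
  · rw [direction_affineSpan]
    exact fun v hv => linear_eqOn_vectorSpan (g := 0) (fun x hx => hx.2) hv
  rintro v ⟨hvP, hvg : g.linear v = 0⟩
  rw [direction_affineSpan] at hvP
  refine mem_direction_affineSpan_of_eventually ⟨hy, hgy⟩ ?_
  have hev := eventually_add_smul_mem_polyhedralSet (L := L) (y := y) (v := v) fun g' hg' => by
    by_cases hgg : g' = g
    · exact .inr ⟨hgg ▸ hgy.ge, hgg ▸ hvg⟩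
    · exact (hdich g' hg' hgg).imp_right fun h0 =>
        ⟨hy g' hg', linear_eqOn_vectorSpan (g := 0) h0 hvP⟩
  filter_upwards [hev] with t ht
  exact ⟨ht, by rw [g.apply_smul_add, hvg, hgy, mul_zero, add_zero]⟩

variable [FiniteDimensional ℝ E]

theorem IsIrredundant.exists_relInterior_facet (hL : IsIrredundant L) {g : E →ᵃ[ℝ] ℝ}
    (hg : g ∈ L) {s : E} (hs : s ∈ polyhedralSet L) (hgs : g s ≠ 0) :
    ∃ y ∈ polyhedralSet L, g y = 0 ∧
      ∀ g' ∈ L, g' ≠ g → 0 < g' y ∨ ∀ x ∈ polyhedralSet L, g' x = 0 := by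
  obtain ⟨w, hw, hgw⟩ := hL g hg
  obtain ⟨z, hzP, hz⟩ := (convex_polyhedralSet L).exists_mem_nhdsWithin_affineSpan ⟨s, hs⟩
  have hdich : ∀ g' ∈ L, 0 < g' z ∨ ∀ x ∈ polyhedralSet L, g' x = 0 := fun g' hg' =>
    (hzP g' hg').lt_or_eq.imp_right fun h0 _ hx =>
      g'.eq_zero_of_nonneg_of_mem_nhdsWithin hzP hz (fun x hx => hx g' hg') h0.symm hx
  have hgz : 0 < g z := (hdich g hg).resolve_right fun h0 => hgs (h0 s hs)
  -- `y` is the point where the segment from `z` to `w` leaves the halfspace `g ≥ 0`.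
  obtain ⟨t, ht⟩ : ∃ t, t = g z / (g z - g w) := ⟨_, rfl⟩
  have hden : 0 < g z - g w := by linarith
  have ht0 : 0 ≤ t := ht ▸ div_nonneg hgz.le hden.le
  have ht1 : t < 1 := ht ▸ (div_lt_one hden).2 (by linarith)
  have hgy : g (lineMap z w t) = 0 := by
    rw [g.apply_lineMap_eq, ht]
    field_simp
    ring
  refine ⟨lineMap z w t, fun g' hg' => ?_, hgy, fun g' hg' hgg => (hdich g' hg').imp_left ?_⟩
  · by_cases hgg : g' = g
    · exact hgg ▸ hgy.ge
    · rw [g'.apply_lineMap_eq]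
      have := hw g' hg' hgg
      have := hzP g' hg'
      positivity
  · intro hpos
    rw [g'.apply_lineMap_eq]
    have := hw g' hg' hgg
    have : 0 < 1 - t := by linarith
    positivity

theorem IsIrredundant.finrank_facet_add_one (hL : IsIrredundant L) {g : E →ᵃ[ℝ] ℝ} (hg : g ∈ L)
    {s : E} (hs : s ∈ polyhedralSet L) (hgs : g s ≠ 0) :
    finrank ℝ (affineSpan ℝ {x ∈ polyhedralSet L | g x = 0}).direction + 1 =
      finrank ℝ (affineSpan ℝ (polyhedralSet L)).direction := by
  obtain ⟨y, hy, hgy, hdich⟩ := hL.exists_relInterior_facet hg hs hgs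
  rw [direction_affineSpan_sep_eq_inf_ker hy hgy hdich]
  refine Submodule.finrank_inf_ker_add_one fun hle => hgs ?_
  have := hle (AffineSubspace.vsub_mem_direction (subset_affineSpan ℝ _ hs)
    (subset_affineSpan ℝ _ hy))
  rwa [LinearMap.mem_ker, g.linearMap_vsub, hgy, vsub_eq_sub, sub_zero] at this

theorem IsIrredundant.exists_facet_superset (hL : IsIrredundant L) {ℓ : E →ᵃ[ℝ] ℝ}
    (hℓ : ∀ x ∈ polyhedralSet L, 0 ≤ ℓ x) (hF : {x ∈ polyhedralSet L | ℓ x = 0}.Nonempty)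
    {s : E} (hs : s ∈ polyhedralSet L) (hℓs : ℓ s ≠ 0) :
    ∃ g ∈ L, (∀ x ∈ polyhedralSet L, ℓ x = 0 → g x = 0) ∧ (∃ x ∈ polyhedralSet L, g x ≠ 0) ∧
      finrank ℝ (affineSpan ℝ {x ∈ polyhedralSet L | g x = 0}).direction + 1 =
        finrank ℝ (affineSpan ℝ (polyhedralSet L)).direction := by
  obtain ⟨x₀, ⟨hx₀P, hℓx₀⟩, hx₀⟩ := ((convex_polyhedralSet L).inter
    ((convex_singleton 0).affine_preimage ℓ)).exists_mem_nhdsWithin_affineSpan hF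
  obtain ⟨g, hg, hgx₀, t, ht, hgt⟩ := exists_tight_of_mem_proper_face hℓ hx₀P hℓx₀ hs hℓs
  refine ⟨g, hg, fun x hx hℓx => ?_, ⟨t, ht, hgt⟩, hL.finrank_facet_add_one hg ht hgt⟩
  exact g.eq_zero_of_nonneg_of_mem_nhdsWithin (s := {x ∈ polyhedralSet L | ℓ x = 0})
    ⟨hx₀P, hℓx₀⟩ hx₀ (fun x hx => hx.1 g hg) hgx₀ ⟨hx, hℓx⟩

end Polyhedral

section Euclidean

variable {d : ℕ}

local notation "ℝᵈ" => EuclideanSpace ℝ (Fin d)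

theorem continuous_pev (q : MvPolynomial (Fin d) ℝ) : Continuous (pev q) :=
  (MvPolynomial.continuous_eval q).comp (EuclideanSpace.equiv (Fin d) ℝ).continuous

theorem analyticOnNhd_pev (q : MvPolynomial (Fin d) ℝ) : AnalyticOnNhd ℝ (pev q) univ :=
  AnalyticOnNhd.eval_continuousLinearMap (EuclideanSpace.equiv (Fin d) ℝ).toContinuousLinearMap q

theorem pev_eq_zero_of_eventually {q : MvPolynomial (Fin d) ℝ} {A : AffineSubspace ℝ ℝᵈ}
    {u : ℝᵈ} (hu : u ∈ A) (h : ∀ᶠ x in 𝓝[A] u, pev q x = 0) {x : ℝᵈ} (hx : x ∈ A) :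
    pev q x = 0 := by
  have hline : AnalyticOnNhd ℝ (fun t => pev q (lineMap u x t)) univ := fun t _ => by
    have : AnalyticAt ℝ (fun t : ℝ => lineMap u x t) t := by
      simp_rw [lineMap_apply_module]
      exact ((analyticAt_const.sub analyticAt_id).smul analyticAt_const).add
        (analyticAt_id.smul analyticAt_const)
    exact (analyticOnNhd_pev q _ (mem_univ _)).comp this
  simpa using hline.eqOn_zero_of_preconnected_of_eventuallyEq_zero isPreconnected_univ
    (mem_univ 0) (eventually_lineMap_mem h hu hx) (mem_univ 1)

theorem pev_eq_zero_on_affineSpan {q : MvPolynomial (Fin d) ℝ} {s : Set ℝᵈ} (hs : Convex ℝ s)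
    (hne : s.Nonempty) (h : ∀ x ∈ s, pev q x = 0) {x : ℝᵈ} (hx : x ∈ affineSpan ℝ s) :
    pev q x = 0 := by
  obtain ⟨x₀, hx₀s, hx₀⟩ := hs.exists_mem_nhdsWithin_affineSpan hne
  exact pev_eq_zero_of_eventually (subset_affineSpan ℝ s hx₀s) (mem_of_superset hx₀ h) hx

theorem exists_pev_eq_zero_of_eventually_exists {ι : Type*} [Finite ι]
    {q : ι → MvPolynomial (Fin d) ℝ} {A : AffineSubspace ℝ ℝᵈ} {u : ℝᵈ} (hu : u ∈ A)
    (h : ∀ᶠ x in 𝓝[A] u, ∃ i, pev (q i) x = 0) : ∃ i, ∀ x ∈ A, pev (q i) x = 0 := by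
  have : CompleteSpace A := A.closed_of_finiteDimensional.completeSpace_coe
  obtain ⟨i, v, hv⟩ := nonempty_interior_of_iUnion_mem_nhds (X := (A : Set ℝᵈ)) (u := ⟨u, hu⟩)
    (C := fun i => {x | pev (q i) x = 0})
    (fun i => isClosed_eq ((continuous_pev _).comp continuous_subtype_val) continuous_const)
    (((eventually_nhds_subtype_iff (A : Set ℝᵈ) ⟨u, hu⟩ _).2 h).mono fun _ hx => mem_iUnion.2 hx)
  exact ⟨i, fun x hx => pev_eq_zero_of_eventually v.2
    ((eventually_nhds_subtype_iff (A : Set ℝᵈ) v _).1 (mem_interior_iff_mem_nhds.1 hv)) hx⟩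

theorem exists_pev_eq_zero_on_of_subset_closure_diff {ι : Type*} [Finite ι]
    {q : ι → MvPolynomial (Fin d) ℝ} {G A : Set ℝᵈ} (hGc : Convex ℝ G) (hGne : G.Nonempty)
    (hGS : G ⊆ {x | ∀ i, 0 ≤ pev (q i) x}) (hGA : G ⊆ closure (A \ {x | ∀ i, 0 ≤ pev (q i) x})) :
    ∃ i, (∀ x ∈ G, pev (q i) x = 0) ∧ ¬∀ x ∈ A, pev (q i) x = 0 := by
  have htight : ∀ y ∈ G, ∃ i, pev (q i) y = 0 ∧ ¬∀ x ∈ A, pev (q i) x = 0 := by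
    intro y hy
    by_contra! h
    -- Otherwise the `qᵢ` positive at `y` stay positive nearby and the others vanish on `A`.
    have hev : ∀ᶠ x in 𝓝 y, ∀ i, x ∈ A → 0 ≤ pev (q i) x := eventually_all.2 fun i =>
      (hGS hy i).lt_or_eq.elim
        (fun hpos => ((continuous_pev _).continuousAt.eventually (lt_mem_nhds hpos)).mono
          fun x hx _ => hx.le)
        fun h0 => .of_forall fun x hx => (h i h0.symm x hx).ge
    obtain ⟨x, hxy, hxA, hxS⟩ := mem_closure_iff_nhds.1 (hGA hy) _ hev
    exact hxS fun i => hxy i hxA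
  obtain ⟨x₀, hx₀G, hx₀⟩ := hGc.exists_mem_nhdsWithin_affineSpan hGne
  obtain ⟨⟨i, hi⟩, hzero⟩ := exists_pev_eq_zero_of_eventually_exists
    (q := fun i : {i // ¬∀ x ∈ A, pev (q i) x = 0} => q i) (subset_affineSpan ℝ G hx₀G)
    (mem_of_superset hx₀ fun y hy => by
      obtain ⟨i, h0, hi⟩ := htight y hy
      exact ⟨⟨i, hi⟩, h0⟩)
  exact ⟨i, fun x hx => hzero x (subset_affineSpan ℝ G hx), hi⟩

theorem exists_pev_eq_zero_on_sep_not_on {ι : Type*} [Finite ι] {q : ι → MvPolynomial (Fin d) ℝ}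
    {P : Set ℝᵈ} (hP : Convex ℝ P)
    (hPS : (affineSpan ℝ P : Set ℝᵈ) ∩ {x | ∀ i, 0 ≤ pev (q i) x} = P) {g : ℝᵈ →ᵃ[ℝ] ℝ}
    (hg : ∀ x ∈ P, 0 ≤ g x) (hne : {x ∈ P | g x = 0}.Nonempty) {s : ℝᵈ} (hs : s ∈ P)
    (hgs : g s ≠ 0) :
    ∃ i, (∀ x ∈ {x ∈ P | g x = 0}, pev (q i) x = 0) ∧ ¬∀ x ∈ P, pev (q i) x = 0 := by
  have hdiff : (affineSpan ℝ P : Set ℝᵈ) \ P ⊆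
      (affineSpan ℝ P : Set ℝᵈ) \ {x | ∀ i, 0 ≤ pev (q i) x} :=
    fun x hx => ⟨hx.1, fun hxS => hx.2 (hPS ▸ ⟨hx.1, hxS⟩)⟩
  obtain ⟨i, hiG, hiA⟩ := exists_pev_eq_zero_on_of_subset_closure_diff
    (hP.inter ((convex_singleton 0).affine_preimage g)) hne (fun x hx => (hPS.ge hx.1).2)
    ((subset_closure_affineSpan_diff hg hs hgs).trans (closure_mono hdiff))
  exact ⟨i, hiG, fun h => hiA fun x hx => pev_eq_zero_on_affineSpan hP ⟨s, hs⟩ h hx⟩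

theorem IsPolyhedron.exists_isIrredundant {P : Set ℝᵈ} (hP : IsPolyhedron P) :
    ∃ L, P = polyhedralSet L ∧ IsIrredundant L := by
  classical
  obtain ⟨k, l, rfl⟩ := hP
  obtain ⟨L, hL, hirr⟩ := exists_isIrredundant_polyhedralSet_eq (Finset.univ.image l)
  exact ⟨L, by rw [hL]; ext; simp [polyhedralSet], hirr⟩

theorem IsPolyhedron.sep_eq_zero_of_nonneg {P : Set ℝᵈ} (hP : IsPolyhedron P) {g : ℝᵈ →ᵃ[ℝ] ℝ}
    (hg : ∀ x ∈ P, 0 ≤ g x) : IsPolyhedron {x ∈ P | g x = 0} := by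
  obtain ⟨k, l, rfl⟩ := hP
  refine ⟨k + 1, Fin.cons (-g) l, ?_⟩
  ext x
  simp only [mem_ofPred_eq, Fin.forall_fin_succ, Fin.cons_zero, Fin.cons_succ,
    AffineMap.coe_neg, Pi.neg_apply, neg_nonneg]
  exact ⟨fun ⟨hx, hgx⟩ => ⟨hgx.le, hx⟩, fun ⟨hgx, hx⟩ => ⟨hx, le_antisymm hgx (hg x hx)⟩⟩

theorem isFace_of_sep_subset {P G : Set ℝᵈ} {ℓ : ℝᵈ →ᵃ[ℝ] ℝ} (hℓ : ∀ x ∈ P, 0 ≤ ℓ x)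
    (hGP : G ⊆ P) (hFG : {x ∈ P | ℓ x = 0} ⊆ G) : IsFace G {x ∈ P | ℓ x = 0} :=
  .inr ⟨ℓ, fun x hx => hℓ x (hGP hx),
    Subset.antisymm (fun _ hx => ⟨hFG hx, hx.2⟩) fun _ hx => ⟨hGP hx.1, hx.2⟩⟩

-- `hPS` weakens `P = S` to a condition that facets of `P` inherit, so the induction can run.
theorem sDim_sub_sDim_le_ncard_vanishing {ι : Type*} [Finite ι]
    {q : ι → MvPolynomial (Fin d) ℝ} {P F : Set ℝᵈ} (hP : IsPolyhedron P)
    (hPS : (affineSpan ℝ P : Set ℝᵈ) ∩ {x | ∀ i, 0 ≤ pev (q i) x} = P)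
    (hF : IsFace P F) (hne : F.Nonempty) :
    sDim P - sDim F ≤ {i | (∀ x ∈ F, pev (q i) x = 0) ∧ ¬∀ x ∈ P, pev (q i) x = 0}.ncard := by
  induction hn : sDim P using Nat.strong_induction_on generalizing P with
  | _ n ih =>
  obtain ⟨L, rfl, hL⟩ := hP.exists_isIrredundant
  rcases hF with rfl | ⟨ℓ, hℓ, rfl⟩
  · simp [← hn]
  set P := polyhedralSet L
  set F := {x ∈ P | ℓ x = 0}
  by_cases hFP : ∃ s ∈ P, ℓ s ≠ 0
  swap
  · rw [show F = P from sep_eq_self_iff_mem_true.2 fun x hx => by_contra fun h => hFP ⟨x, hx, h⟩]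
    simp [← hn]
  obtain ⟨s, hs, hℓs⟩ := hFP
  obtain ⟨g, hgL, hgF, ⟨t, ht, hgt⟩, hdim⟩ := hL.exists_facet_superset hℓ hne hs hℓs
  set G := {x ∈ P | g x = 0}
  have hdim' : sDim G + 1 = sDim P := hdim
  have hgP : ∀ x ∈ P, 0 ≤ g x := fun x hx => hx g hgL
  have hFG : F ⊆ G := fun x hx => ⟨hx.1, hgF x hx.1 hx.2⟩
  have hIH : sDim G - sDim F ≤
      {j | (∀ x ∈ F, pev (q j) x = 0) ∧ ¬∀ x ∈ G, pev (q j) x = 0}.ncard :=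
    ih _ (by omega) (hP.sep_eq_zero_of_nonneg hgP) (affineSpan_sep_inter_eq hPS g)
      (isFace_of_sep_subset hℓ (sep_subset _ _) hFG) rfl
  obtain ⟨i, hiG, hiP⟩ := exists_pev_eq_zero_on_sep_not_on (convex_polyhedralSet L) hPS hgP
    (hne.mono hFG) ht hgt
  have hcard : {j | (∀ x ∈ F, pev (q j) x = 0) ∧ ¬∀ x ∈ G, pev (q j) x = 0}.ncard + 1 ≤
      {j | (∀ x ∈ F, pev (q j) x = 0) ∧ ¬∀ x ∈ P, pev (q j) x = 0}.ncard := by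
    rw [← ncard_insert_of_notMem fun h => h.2 hiG]
    exact ncard_le_ncard (insert_subset ⟨fun x hx => hiG x (hFG hx), hiP⟩
      fun j hj => ⟨hj.1, fun h => hj.2 fun x hx => h x hx.1⟩)
  omega

end Euclidean

/-- **Proposition.** If a `d`-dimensional polyhedron `S ⊆ ℝ^d` is represented as
`S = {q₁ ≥ 0, …, q_m ≥ 0}` and `F` is a nonempty face of `S` of dimension `f`, then at
least `d - f` of the polynomials `qᵢ` vanish identically on `F`; in particular `m ≥ d - f`. -/
theorem vanishing_polynomials_on_face {d m f : ℕ}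
    (S F : Set (EuclideanSpace ℝ (Fin d)))
    (q : Fin m → MvPolynomial (Fin d) ℝ)
    (hpoly : IsPolyhedron S)
    (hdim : affineSpan ℝ S = ⊤)
    (hS : S = {x | ∀ i, 0 ≤ pev (q i) x})
    (hF : IsFace S F)
    (hne : F.Nonempty)
    (hf : sDim F = f) :
    d - f ≤ Set.ncard {i : Fin m | ∀ x ∈ F, pev (q i) x = 0} ∧ d - f ≤ m := by
  have hdS : sDim S = d := by
    rw [sDim, hdim, AffineSubspace.direction_top, finrank_top, finrank_euclideanSpace_fin]
  have hcount := sDim_sub_sDim_le_ncard_vanishing hpoly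
    (by rw [hdim, ← hS]; exact univ_inter S) hF hne
  rw [hdS, hf] at hcount
  have hle := hcount.trans (ncard_le_ncard fun i hi => hi.1)
  exact ⟨hle, hle.trans ((ncard_le_ncard (subset_univ _)).trans (by simp))⟩
end

section
/- Let ρ > 0 and let s, k ∈ ℕ with s ≤ k. Then there exists ε > 0 such that for all real numbers a_1, …, a_k with |a_1| ≤ ε, …, |a_s| ≤ ε and a_{s+1} ≥ ρ, …, a_k ≥ ρ, the following are equivalent: (i) a_1 ≥ 0, …, a_s ≥ 0; (ii) σ_{k−s+1}(a_1, …, a_k) ≥ 0, σ_{k−s+2}(a_1, …, a_k) ≥ 0, …, σ_k(a_1, …, a_k) ≥ 0. -/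
/-!
If some `a i` with `i < s` is negative, then `μ := -a i` lies in `(0, ε]` and
`∏ i, (a i + μ) = 0`. Expand this product over subsets `T`. The terms with `#T > k - s` add up
to `∑_{j > k - s} σ_j(a) μ^(k - j) ≥ 0`. Among the terms with `#T ≤ k - s`, the one for the set
of large indices, `μ^s ∏_{i ≥ s} a i > 0`, exceeds every other in absolute value by a factor
`ρ / ε = 2^(k+1)`, so these terms add up to something positive: a contradiction.
-/

/-- The `i`-th elementary symmetric function of `a 0, …, a (k-1)`. -/
noncomputable def esymmVal {k : ℕ} (a : Fin k → ℝ) (i : ℕ) : ℝ :=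
  ∑ t ∈ Finset.powersetCard i (Finset.univ : Finset (Fin k)), ∏ j ∈ t, a j

open Finset

section Subsets

variable {ι : Type*} [Fintype ι] [DecidableEq ι]

lemma prod_add_const_eq_sum_powerset (a : ι → ℝ) (x : ℝ) :
    ∏ i, (a i + x) = ∑ T ∈ univ.powerset, (∏ i ∈ T, a i) * x ^ (Fintype.card ι - #T) := by
  rw [prod_add]
  refine sum_congr rfl fun T _ => ?_
  rw [prod_const, ← compl_eq_univ_sdiff, card_compl]

lemma mul_pow_mul_pow_sub_le {ε μ ρ : ℝ} {c m : ℕ} (hμ : 0 ≤ μ) (hμε : μ ≤ ε) (hερ : ε ≤ ρ)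
    (hcm : c ≤ m) (hm : 1 ≤ m) : ρ * (ε ^ c * μ ^ (m - c)) ≤ ε * ρ ^ m := by
  obtain ⟨n, rfl⟩ : ∃ n, m = n + 1 := ⟨m - 1, by omega⟩
  have hε : 0 ≤ ε := hμ.trans hμε
  have hρ : 0 ≤ ρ := hε.trans hερ
  calc ρ * (ε ^ c * μ ^ (n + 1 - c)) ≤ ρ * (ε ^ c * ε ^ (n + 1 - c)) := by gcongr
    _ = ε * (ρ * ε ^ n) := by rw [← pow_add, Nat.add_sub_cancel' hcm, pow_succ]; ring
    _ ≤ ε * (ρ * ρ ^ n) := by gcongr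
    _ = ε * ρ ^ (n + 1) := by rw [pow_succ']

lemma mul_abs_prod_mul_pow_le {a : ι → ℝ} {S T : Finset ι} {ε ρ μ : ℝ} (hμ : 0 ≤ μ)
    (hμε : μ ≤ ε) (hερ : ε ≤ ρ) (hsmall : ∀ i ∈ S, |a i| ≤ ε) (hbig : ∀ i ∉ S, ρ ≤ a i)
    (hT : #T ≤ #Sᶜ) (hTS : T ≠ Sᶜ) :
    ρ * (|∏ i ∈ T, a i| * μ ^ (Fintype.card ι - #T)) ≤ ε * ((∏ i ∈ Sᶜ, a i) * μ ^ #S) := by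
  have hρ : 0 ≤ ρ := hμ.trans (hμε.trans hερ)
  set U := T ∩ S
  set V := T \ S
  set D := Sᶜ \ T
  have hScT : Sᶜ ∩ T = V := by ext; simp [V, and_comm]
  have hprodT : |∏ i ∈ T, a i| = (∏ i ∈ U, |a i|) * ∏ i ∈ V, a i := by
    rw [← prod_inter_mul_prod_sdiff T S, abs_mul, abs_prod, abs_of_nonneg]
    exact prod_nonneg fun i hi => hρ.trans (hbig i (mem_sdiff.1 hi).2)
  have hprodS : ∏ i ∈ Sᶜ, a i = (∏ i ∈ V, a i) * ∏ i ∈ D, a i := by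
    rw [← prod_inter_mul_prod_sdiff Sᶜ T, hScT]
  have hV : 0 ≤ ∏ i ∈ V, a i := prod_nonneg fun i hi => hρ.trans (hbig i (mem_sdiff.1 hi).2)
  have hU : ∏ i ∈ U, |a i| ≤ ε ^ #U :=
    (prod_le_prod (fun _ _ => abs_nonneg _) fun i hi => hsmall i (mem_inter.1 hi).2).trans_eq
      (prod_const ε)
  have hD : ρ ^ #D ≤ ∏ i ∈ D, a i :=
    (prod_const ρ).symm.trans_le
      (prod_le_prod (fun _ _ => hρ) fun i hi => hbig i (mem_compl.1 (mem_sdiff.1 hi).1))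
  have hD_pos : 1 ≤ #D := by
    refine one_le_card.2 (nonempty_iff_ne_empty.2 fun hD => hTS ?_)
    exact (eq_of_subset_of_card_le (sdiff_eq_empty_iff_subset.1 hD) hT).symm
  have hcardT : #U + #V = #T := card_inter_add_card_sdiff T S
  have hcardS : #V + #D = #Sᶜ := by rw [← hScT]; exact card_inter_add_card_sdiff Sᶜ T
  have hcardι : #S + #Sᶜ = Fintype.card ι := card_add_card_compl S
  calc ρ * (|∏ i ∈ T, a i| * μ ^ (Fintype.card ι - #T))
      = (∏ i ∈ V, a i) * μ ^ #S * (ρ * ((∏ i ∈ U, |a i|) * μ ^ (#D - #U))) := by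
        rw [hprodT, show Fintype.card ι - #T = #S + (#D - #U) by omega, pow_add]; ring
    _ ≤ (∏ i ∈ V, a i) * μ ^ #S * (ρ * (ε ^ #U * μ ^ (#D - #U))) := by gcongr
    _ ≤ (∏ i ∈ V, a i) * μ ^ #S * (ε * ρ ^ #D) :=
        mul_le_mul_of_nonneg_left (mul_pow_mul_pow_sub_le hμ hμε hερ (by omega) hD_pos)
          (mul_nonneg hV (pow_nonneg hμ _))
    _ ≤ (∏ i ∈ V, a i) * μ ^ #S * (ε * ∏ i ∈ D, a i) := by
        have hε : 0 ≤ ε := hμ.trans hμε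
        gcongr
    _ = ε * ((∏ i ∈ Sᶜ, a i) * μ ^ #S) := by rw [hprodS]; ring

lemma sum_powerset_card_le_compl_pos {a : ι → ℝ} {S : Finset ι} {ε ρ μ : ℝ} (hμ : 0 < μ)
    (hμε : μ ≤ ε) (hε : 2 ^ Fintype.card ι * ε < ρ) (hsmall : ∀ i ∈ S, |a i| ≤ ε)
    (hbig : ∀ i ∉ S, ρ ≤ a i) :
    0 < ∑ T ∈ univ.powerset with #T ≤ #Sᶜ, (∏ i ∈ T, a i) * μ ^ (Fintype.card ι - #T) := by
  set f : Finset ι → ℝ := fun T => (∏ i ∈ T, a i) * μ ^ (Fintype.card ι - #T)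
  set 𝒯 : Finset (Finset ι) := {T ∈ univ.powerset | #T ≤ #Sᶜ}
  have hε0 : 0 ≤ ε := hμ.le.trans hμε
  have hερ : ε ≤ ρ := le_trans (le_mul_of_one_le_left hε0 (one_le_pow₀ one_le_two)) hε.le
  have hρ : 0 < ρ := hμ.trans_le (hμε.trans hερ)
  have hmem : Sᶜ ∈ 𝒯 := mem_filter.2 ⟨mem_powerset.2 (subset_univ _), le_rfl⟩
  have hfS : f Sᶜ = (∏ i ∈ Sᶜ, a i) * μ ^ #S := by
    simp only [f, card_compl, Nat.sub_sub_self (card_le_univ S)]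
  have hfS_pos : 0 < f Sᶜ := by
    rw [hfS]
    exact mul_pos (prod_pos fun i hi => hρ.trans_le (hbig i (mem_compl.1 hi))) (pow_pos hμ _)
  have hcard : (#(𝒯.erase Sᶜ) : ℝ) ≤ 2 ^ Fintype.card ι := by
    have := card_le_card ((erase_subset Sᶜ 𝒯).trans (filter_subset _ univ.powerset))
    rw [card_powerset, card_univ] at this
    exact_mod_cast this
  have hrest : ρ * ∑ T ∈ 𝒯.erase Sᶜ, |f T| < ρ * f Sᶜ :=
    calc ρ * ∑ T ∈ 𝒯.erase Sᶜ, |f T| ≤ ∑ _T ∈ 𝒯.erase Sᶜ, ε * f Sᶜ := by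
          rw [mul_sum]
          refine sum_le_sum fun T hT => ?_
          obtain ⟨hTS, hT⟩ := mem_erase.1 hT
          rw [abs_mul, abs_of_nonneg (pow_nonneg hμ.le _), hfS]
          exact mul_abs_prod_mul_pow_le hμ.le hμε hερ hsmall hbig (mem_filter.1 hT).2 hTS
      _ ≤ 2 ^ Fintype.card ι * ε * f Sᶜ := by
          rw [sum_const, nsmul_eq_mul, ← mul_assoc]; gcongr
      _ < ρ * f Sᶜ := by gcongr
  have hneg : -∑ T ∈ 𝒯.erase Sᶜ, |f T| ≤ ∑ T ∈ 𝒯.erase Sᶜ, f T := by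
    rw [← sum_neg_distrib]; exact sum_le_sum fun T _ => neg_abs_le _
  rw [← add_sum_erase _ _ hmem]
  linarith [lt_of_mul_lt_mul_left hrest hρ.le]

end Subsets

lemma esymmVal_nonneg {k : ℕ} {a : Fin k → ℝ} (ha : ∀ i, 0 ≤ a i) (j : ℕ) : 0 ≤ esymmVal a j :=
  sum_nonneg fun _ _ => prod_nonneg fun i _ => ha i

lemma sum_powerset_filter_card_eq_sum_esymmVal {k : ℕ} (a : Fin k → ℝ) (x : ℝ) (p : ℕ → Prop)
    [DecidablePred p] :
    ∑ T ∈ univ.powerset with p #T, (∏ i ∈ T, a i) * x ^ (k - #T) =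
      ∑ j ∈ range (k + 1) with p j, esymmVal a j * x ^ (k - j) := by
  rw [sum_filter, sum_powerset, sum_filter, card_univ, Fintype.card_fin]
  refine sum_congr rfl fun j _ => ?_
  rw [esymmVal, sum_mul]
  split_ifs with hj
  · exact sum_congr rfl fun T hT => by rw [(mem_powersetCard.1 hT).2, if_pos hj]
  · exact sum_eq_zero fun T hT => by rw [(mem_powersetCard.1 hT).2, if_neg hj]

/-- **Lemma.** Let `ρ > 0` and `s ≤ k`. There is `ε > 0` such that whenever
`|a₁|, …, |a_s| ≤ ε` and `a_{s+1}, …, a_k ≥ ρ`, one has `a₁, …, a_s ≥ 0` if and only if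
`σ_{k-s+1}(a) ≥ 0, …, σ_k(a) ≥ 0`. -/
theorem esymm_sign_criterion {k : ℕ} (s : ℕ) (ρ : ℝ)
    (hρ : 0 < ρ) (hsk : s ≤ k) :
    ∃ ε > (0 : ℝ), ∀ a : Fin k → ℝ,
      (∀ i : Fin k, (i : ℕ) < s → |a i| ≤ ε) →
      (∀ i : Fin k, s ≤ (i : ℕ) → ρ ≤ a i) →
      ((∀ i : Fin k, (i : ℕ) < s → 0 ≤ a i) ↔
        (∀ j : ℕ, k - s + 1 ≤ j → j ≤ k → 0 ≤ esymmVal a j)) := by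
  have hε : 2 ^ Fintype.card (Fin k) * (ρ / 2 ^ (k + 1)) < ρ := by
    rw [Fintype.card_fin, pow_succ]; field_simp; linarith
  refine ⟨ρ / 2 ^ (k + 1), by positivity, fun a hsmall hbig => ⟨fun hpos j _ _ => ?_, fun hσ => ?_⟩⟩
  · refine esymmVal_nonneg (fun i => ?_) j
    rcases lt_or_ge (i : ℕ) s with h | h
    exacts [hpos i h, hρ.le.trans (hbig i h)]
  by_contra! ⟨i₀, hi₀s, hi₀⟩
  set S : Finset (Fin k) := {i | (i : ℕ) < s}
  have hSc : #Sᶜ = k - s := by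
    rw [card_compl, Fin.card_filter_val_lt, Fintype.card_fin, min_eq_right hsk]
  have hlow := sum_powerset_card_le_compl_pos (S := S) (neg_pos.2 hi₀)
    ((neg_le_abs _).trans (hsmall i₀ hi₀s)) hε (fun i hi => hsmall i (by simpa [S] using hi))
    (fun i hi => hbig i (by simpa [S] using hi))
  have hhigh : 0 ≤ ∑ T ∈ univ.powerset with ¬#T ≤ #Sᶜ, (∏ i ∈ T, a i) * (-a i₀) ^ (k - #T) := by
    rw [sum_powerset_filter_card_eq_sum_esymmVal a _ (¬· ≤ #Sᶜ), hSc]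
    refine sum_nonneg fun j hj => ?_
    rw [mem_filter, mem_range] at hj
    exact mul_nonneg (hσ j (by omega) (by omega)) (pow_nonneg (neg_nonneg.2 hi₀.le) _)
  have hzero : ∏ i, (a i + -a i₀) = 0 := prod_eq_zero (mem_univ i₀) (add_neg_cancel _)
  rw [prod_add_const_eq_sum_powerset, ← sum_filter_add_sum_filter_not _ (fun T => #T ≤ #Sᶜ)]
    at hzero
  simp only [Fintype.card_fin] at hlow hzero
  linarith
end

section
/- Let 0 < δ < ρ be real numbers and let m ∈ ℕ. Then there exists a real polynomial κ in one variable such that: (i) κ(t) ≥ 0 for all t ∈ [−ρ, ρ], and the only zero of κ in [−ρ, ρ] is t = 0; (ii) κ(t) ≤ 1/4^m for all t ∈ [−ρ, 0]; (iii) κ(t) ≥ 2 for all t ∈ [δ, ρ]; (iv) κ(t) ≤ 3 for all t ∈ [0, ρ]. -/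
/-!
Rescale to `x = t / ρ ∈ [-1, 1]` and take `q(x) = x² ((x + 2) / 3)^N`: it lies in `[0, 1]`,
vanishes only at `0`, is at most `(2/3)^N` for `x ≤ 0` and at least `s² ((s + 2) / 3)^N` for
`x ≥ s = δ / ρ`. Since `(s + 2) / 3 > 2 / 3`, for large `N` the second bound beats the first by
any prescribed factor. The saturation `κ = 3 (1 - (1 - q)^M)` then keeps `κ ≤ 3 M q` small where
`q` is small, while `M q ≥ 2` forces `κ ≥ 2`.
-/

open Polynomial Set

section Saturation

variable {q : ℝ}

lemma one_sub_one_sub_pow_nonneg (h0 : 0 ≤ q) (h1 : q ≤ 1) (M : ℕ) : 0 ≤ 1 - (1 - q) ^ M := by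
  have : (1 - q) ^ M ≤ 1 := pow_le_one₀ (by linarith) (by linarith)
  linarith

lemma one_sub_one_sub_pow_pos (h0 : 0 < q) (h1 : q ≤ 1) {M : ℕ} (hM : M ≠ 0) :
    0 < 1 - (1 - q) ^ M := by
  have : (1 - q) ^ M < 1 := pow_lt_one₀ (by linarith) (by linarith) hM
  linarith

lemma one_sub_one_sub_pow_le_mul (h : q ≤ 2) (M : ℕ) : 1 - (1 - q) ^ M ≤ M * q := by
  have := one_add_mul_le_pow (a := -q) (by linarith) M
  rw [← sub_eq_add_neg] at this
  linarith

lemma two_thirds_le_one_sub_one_sub_pow (h0 : 0 ≤ q) (h1 : q ≤ 1) {M : ℕ} (hM : 2 ≤ M * q) :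
    2 / 3 ≤ 1 - (1 - q) ^ M := by
  -- `(1 - q)^M (1 + q)^M = (1 - q²)^M ≤ 1`, while Bernoulli gives `(1 + q)^M ≥ 1 + M q ≥ 3`.
  have hprod : (1 - q) ^ M * (1 + q) ^ M ≤ 1 := by
    rw [← mul_pow]
    exact pow_le_one₀ (by nlinarith) (by nlinarith)
  have hbernoulli : 3 ≤ (1 + q) ^ M := by
    linarith [one_add_mul_le_pow (a := q) (by linarith) M]
  nlinarith [pow_nonneg (sub_nonneg.2 h1) M]

end Saturation

noncomputable def bump (N : ℕ) : ℝ[X] := X ^ 2 * (C (1 / 3) * (X + 2)) ^ N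

section Bump

variable {N : ℕ} {x : ℝ}

@[simp]
lemma eval_bump : (bump N).eval x = x ^ 2 * ((x + 2) / 3) ^ N := by
  simp [bump, div_eq_inv_mul]

lemma bump_nonneg (hx : -2 ≤ x) : 0 ≤ (bump N).eval x := by
  rw [eval_bump]
  have : 0 ≤ x + 2 := by linarith
  positivity

lemma bump_pos (hx : -2 < x) (hx0 : x ≠ 0) : 0 < (bump N).eval x := by
  rw [eval_bump]
  have : 0 < x + 2 := by linarith
  positivity

lemma bump_le_pow (hx : x ∈ Icc (-1) 1) {b : ℝ} (hb : (x + 2) / 3 ≤ b) :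
    (bump N).eval x ≤ b ^ N := by
  obtain ⟨hx1, hx2⟩ := hx
  rw [eval_bump]
  have hsq : x ^ 2 ≤ 1 := by nlinarith
  have hbase : 0 ≤ (x + 2) / 3 := by linarith
  calc x ^ 2 * ((x + 2) / 3) ^ N ≤ 1 * b ^ N :=
        mul_le_mul hsq (pow_le_pow_left₀ hbase hb N) (by positivity) zero_le_one
    _ = b ^ N := one_mul _

lemma bump_le_one (hx : x ∈ Icc (-1) 1) : (bump N).eval x ≤ 1 := by
  simpa using bump_le_pow (b := 1) hx (by linarith [hx.2])

lemma bump_le_two_thirds_pow (hx : x ∈ Icc (-1) 0) : (bump N).eval x ≤ (2 / 3) ^ N :=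
  bump_le_pow ⟨hx.1, hx.2.trans zero_le_one⟩ (by linarith [hx.2])

lemma bump_le_bump {s : ℝ} (hs : 0 ≤ s) (hsx : s ≤ x) : (bump N).eval s ≤ (bump N).eval x := by
  simp only [eval_bump]
  gcongr

end Bump

lemma exists_bump_amplification {s ε : ℝ} (hs0 : 0 < s) (hs1 : s < 1) (hε : 0 < ε) :
    ∃ N M : ℕ, 2 ≤ M * (bump N).eval s ∧ 3 * (M * (2 / 3) ^ N) ≤ ε := by
  set a := (s + 2) / 3
  have ha : 2 / 3 < a := by simp only [a]; linarith
  obtain ⟨N, hN⟩ := exists_pow_lt_of_lt_one (by positivity : 0 < s ^ 2 * ε / 9)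
    ((div_lt_one (by positivity)).2 ha)
  set lo := (bump N).eval s
  have hlo0 : 0 < lo := bump_pos (by linarith) hs0.ne'
  have hlo1 : lo ≤ 1 := bump_le_one ⟨by linarith, hs1.le⟩
  have hlo : lo = s ^ 2 * a ^ N := eval_bump
  refine ⟨N, ⌈2 / lo⌉₊, (div_le_iff₀ hlo0).1 (Nat.le_ceil _), ?_⟩
  have hM : (⌈2 / lo⌉₊ : ℝ) ≤ 3 / lo := by
    have := Nat.ceil_lt_add_one (by positivity : 0 ≤ 2 / lo)
    have : 1 ≤ 1 / lo := (one_le_div hlo0).2 hlo1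
    linarith [show 3 / lo = 2 / lo + 1 / lo by ring]
  have hratio : (2 / 3) ^ N / lo = ((2 / 3) / a) ^ N / s ^ 2 := by
    rw [hlo, div_pow (2 / 3 : ℝ) a, div_div, mul_comm (a ^ N)]
  calc 3 * (⌈2 / lo⌉₊ * (2 / 3) ^ N) ≤ 3 * (3 / lo * (2 / 3) ^ N) := by gcongr
    _ = 9 * (((2 / 3) / a) ^ N / s ^ 2) := by rw [← hratio]; ring
    _ ≤ ε := by
      rw [mul_div_assoc', div_le_iff₀ (by positivity)]
      linarith [(lt_div_iff₀ (by norm_num : (0 : ℝ) < 9)).1 hN]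

noncomputable def kappa (ρ : ℝ) (N M : ℕ) : ℝ[X] :=
  C 3 * (1 - (1 - (bump N).comp (C ρ⁻¹ * X)) ^ M)

section Kappa

variable {ρ t : ℝ} {N M : ℕ}

lemma eval_kappa : (kappa ρ N M).eval t = 3 * (1 - (1 - (bump N).eval (t / ρ)) ^ M) := by
  simp only [kappa, eval_mul, eval_C, eval_sub, eval_one, eval_pow, eval_comp, eval_X,
    div_eq_inv_mul]

variable (hρ : 0 < ρ)
include hρ

lemma div_mem_Icc_neg_one_one (ht : t ∈ Icc (-ρ) ρ) : t / ρ ∈ Icc (-1) 1 :=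
  ⟨(le_div_iff₀ hρ).2 (by linarith [ht.1]), (div_le_one hρ).2 ht.2⟩

lemma bump_div_mem_Icc (ht : t ∈ Icc (-ρ) ρ) : (bump N).eval (t / ρ) ∈ Icc 0 1 :=
  ⟨bump_nonneg (by linarith [(div_mem_Icc_neg_one_one hρ ht).1]),
    bump_le_one (div_mem_Icc_neg_one_one hρ ht)⟩

lemma kappa_nonneg (ht : t ∈ Icc (-ρ) ρ) : 0 ≤ (kappa ρ N M).eval t := by
  obtain ⟨hq0, hq1⟩ := bump_div_mem_Icc (N := N) hρ ht
  rw [eval_kappa]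
  linarith [one_sub_one_sub_pow_nonneg hq0 hq1 M]

lemma kappa_le_three (ht : t ∈ Icc (-ρ) ρ) : (kappa ρ N M).eval t ≤ 3 := by
  obtain ⟨-, hq1⟩ := bump_div_mem_Icc (N := N) hρ ht
  rw [eval_kappa]
  linarith [pow_nonneg (sub_nonneg.2 hq1) M]

lemma kappa_eq_zero_iff (hM : M ≠ 0) (ht : t ∈ Icc (-ρ) ρ) :
    (kappa ρ N M).eval t = 0 ↔ t = 0 := by
  refine ⟨fun hzero => ?_, fun ht0 => by simp [eval_kappa, ht0]⟩
  by_contra ht0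
  have hpos : 0 < (bump N).eval (t / ρ) :=
    bump_pos (by linarith [(div_mem_Icc_neg_one_one hρ ht).1]) (div_ne_zero ht0 hρ.ne')
  rw [eval_kappa] at hzero
  linarith [one_sub_one_sub_pow_pos hpos (bump_div_mem_Icc hρ ht).2 hM]

lemma kappa_le_of_nonpos (ht : t ∈ Icc (-ρ) 0) :
    (kappa ρ N M).eval t ≤ 3 * (M * (2 / 3) ^ N) := by
  have ht' : t ∈ Icc (-ρ) ρ := ⟨ht.1, ht.2.trans hρ.le⟩
  have hsmall : (bump N).eval (t / ρ) ≤ (2 / 3) ^ N :=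
    bump_le_two_thirds_pow
      ⟨(div_mem_Icc_neg_one_one hρ ht').1, div_nonpos_of_nonpos_of_nonneg ht.2 hρ.le⟩
  have hsat := one_sub_one_sub_pow_le_mul
    (by linarith [(bump_div_mem_Icc (N := N) hρ ht').2] : (bump N).eval (t / ρ) ≤ 2) M
  rw [eval_kappa]
  nlinarith [(Nat.cast_nonneg M : (0 : ℝ) ≤ M)]

lemma two_le_kappa {δ : ℝ} (hδ : 0 < δ) (hlo : 2 ≤ M * (bump N).eval (δ / ρ))
    (ht : t ∈ Icc δ ρ) : 2 ≤ (kappa ρ N M).eval t := by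
  obtain ⟨hq0, hq1⟩ := bump_div_mem_Icc (N := N) hρ ⟨by linarith [ht.1], ht.2⟩
  have hlarge : (bump N).eval (δ / ρ) ≤ (bump N).eval (t / ρ) :=
    bump_le_bump (div_pos hδ hρ).le (div_le_div_of_nonneg_right ht.1 hρ.le)
  rw [eval_kappa]
  linarith [two_thirds_le_one_sub_one_sub_pow hq0 hq1 (hlo.trans (by gcongr))]

end Kappa

/-- **Lemma.** For `0 < δ < ρ` and `m ∈ ℕ` there is a univariate real polynomial `κ` with:
`κ ≥ 0` on `[-ρ, ρ]` with `0` as its only zero there, `κ ≤ 1/4^m` on `[-ρ, 0]`,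
`κ ≥ 2` on `[δ, ρ]`, and `κ ≤ 3` on `[0, ρ]`. -/
theorem exists_kappa (δ ρ : ℝ) (m : ℕ) (hδ : 0 < δ) (hδρ : δ < ρ) :
    ∃ κ : Polynomial ℝ,
      (∀ t ∈ Set.Icc (-ρ) ρ, 0 ≤ κ.eval t) ∧
      ({t ∈ Set.Icc (-ρ) ρ | κ.eval t = 0} = {0}) ∧
      (∀ t ∈ Set.Icc (-ρ) (0 : ℝ), κ.eval t ≤ 1 / 4 ^ m) ∧
      (∀ t ∈ Set.Icc δ ρ, 2 ≤ κ.eval t) ∧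
      (∀ t ∈ Set.Icc (0 : ℝ) ρ, κ.eval t ≤ 3) := by
  have hρ : 0 < ρ := hδ.trans hδρ
  obtain ⟨N, M, hlo, hhi⟩ := exists_bump_amplification (div_pos hδ hρ)
    ((div_lt_one hρ).2 hδρ) (by positivity : (0 : ℝ) < 1 / 4 ^ m)
  have hM : M ≠ 0 := by rintro rfl; norm_num at hlo
  refine ⟨kappa ρ N M, fun t ht => kappa_nonneg hρ ht, ?_,
    fun t ht => (kappa_le_of_nonpos hρ ht).trans hhi, fun t ht => two_le_kappa hρ hδ hlo ht,
    fun t ht => kappa_le_three hρ ⟨by linarith [ht.1], ht.2⟩⟩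
  ext t
  refine ⟨fun ⟨ht, hzero⟩ => (kappa_eq_zero_iff hρ hM ht).1 hzero, ?_⟩
  rintro rfl
  exact ⟨⟨by linarith, hρ.le⟩, (kappa_eq_zero_iff hρ hM ⟨by linarith, hρ.le⟩).2 rfl⟩
end

section
/- Let S ⊆ ℝ^d be a compact set of the form S = {x ∈ ℝ^d : f_1(x) ≥ 0, …, f_k(x) ≥ 0} for real polynomials f_1, …, f_k in d variables, and let T ⊆ ℝ^d be a closed set that is a finite union of basic closed semialgebraic sets, with S ∩ T = ∅. Then there exists a real polynomial p in d variables such that p(x) > 0 for all x ∈ S and p(x) < 0 for all x ∈ T. -/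
open MvPolynomial Filter

/-! Urysohn's lemma gives a continuous function equal to `1` on `S` and `-1` on `T`, and by
Stone–Weierstrass a polynomial `q` approximates it within `1/2` on the ball `‖x‖ ≤ R + 1`,
where `S` lies in `‖x‖ ≤ R`. Since `q` grows at most polynomially, subtracting
`c (‖x‖ / (R + 1)) ^ (2M)` with `c` large makes the result negative outside the ball, and with
`M` large this penalty stays below `1/2` where `‖x‖ ≤ R`. -/

open Asymptotics

section

variable {d : ℕ}

lemma exists_pev_isBigO_one_add_norm_pow (q : MvPolynomial (Fin d) ℝ) :
    ∃ m : ℕ, pev q =O[⊤] fun x => (1 + ‖x‖) ^ m := by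
  have mono {m n : ℕ} (h : m ≤ n) :
      (fun x : EuclideanSpace ℝ (Fin d) => (1 + ‖x‖) ^ m) =O[⊤] fun x => (1 + ‖x‖) ^ n :=
    isBigO_of_le _ fun x => by
      simp only [norm_pow, Real.norm_of_nonneg (by positivity : (0:ℝ) ≤ 1 + ‖x‖)]
      exact pow_le_pow_right₀ (by simp) h
  induction q using MvPolynomial.induction_on with
  | C a => exact ⟨0, by simpa [pev] using isBigO_const_const a (one_ne_zero (α := ℝ)) ⊤⟩
  | add p r hp hr =>
    obtain ⟨m, hp⟩ := hp
    obtain ⟨n, hr⟩ := hr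
    have h := (hp.trans (mono (le_max_left m n))).add (hr.trans (mono (le_max_right m n)))
    exact ⟨max m n, by simpa [pev] using h⟩
  | mul_X p i hp =>
    obtain ⟨m, hp⟩ := hp
    have hcoord : (fun x : EuclideanSpace ℝ (Fin d) => x i) =O[⊤] fun x => 1 + ‖x‖ :=
      isBigO_of_le _ fun x => by
        rw [Real.norm_of_nonneg (by positivity : (0:ℝ) ≤ 1 + ‖x‖)]
        linarith [PiLp.norm_apply_le x i]
    refine ⟨m + 1, ?_⟩
    simpa [pev, pow_succ] using hp.mul hcoord

noncomputable def mvPolynomialFunctions (d : ℕ) : Subalgebra ℝ C(EuclideanSpace ℝ (Fin d), ℝ) :=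
  (aeval fun i => ⟨fun x => x i, by fun_prop⟩).range

lemma exists_eq_pev_of_mem_mvPolynomialFunctions {g : C(EuclideanSpace ℝ (Fin d), ℝ)}
    (hg : g ∈ mvPolynomialFunctions d) : ∃ q : MvPolynomial (Fin d) ℝ, ⇑g = pev q := by
  obtain ⟨q, rfl⟩ := hg
  exact ⟨q, funext fun x => comp_aeval_apply _ (ContinuousMap.evalAlgHom ℝ ℝ x) q⟩

lemma mvPolynomialFunctions_separatesPoints :
    (mvPolynomialFunctions d).SeparatesPoints := by
  intro x y hxy
  obtain ⟨i, hi⟩ : ∃ i, x i ≠ y i := by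
    by_contra! h
    exact hxy (PiLp.ext h)
  exact ⟨fun x => x i, ⟨_, ⟨X i, aeval_X _ i⟩, rfl⟩, hi⟩

lemma exists_pev_near_of_isCompact (f : C(EuclideanSpace ℝ (Fin d), ℝ))
    {K : Set (EuclideanSpace ℝ (Fin d))} (hK : IsCompact K) {ε : ℝ} (hε : 0 < ε) :
    ∃ q : MvPolynomial (Fin d) ℝ, ∀ x ∈ K, |pev q x - f x| < ε := by
  obtain ⟨g, hg, hgf⟩ :=
    ContinuousMap.exists_mem_subalgebra_near_continuous_of_isCompact_of_separatesPoints
      mvPolynomialFunctions_separatesPoints f hK hε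
  obtain ⟨q, hq⟩ := exists_eq_pev_of_mem_mvPolynomialFunctions hg
  exact ⟨q, fun x hx => by simpa [hq] using hgf x hx⟩

lemma pev_sub (p q : MvPolynomial (Fin d) ℝ) (x : EuclideanSpace ℝ (Fin d)) :
    pev (p - q) x = pev p x - pev q x :=
  map_sub _ p q

lemma exists_pev_penalty (q : MvPolynomial (Fin d) ℝ) {R ρ ε : ℝ} (hR : 0 ≤ R) (hRρ : R < ρ)
    (hε : 0 < ε) :
    ∃ P : MvPolynomial (Fin d) ℝ, (∀ x, 0 ≤ pev P x) ∧ (∀ x, ‖x‖ ≤ R → pev P x < ε) ∧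
      ∀ x, ρ < ‖x‖ → pev q x < pev P x := by
  have hρ : 0 < ρ := hR.trans_lt hRρ
  obtain ⟨m, hq⟩ := exists_pev_isBigO_one_add_norm_pow q
  obtain ⟨B, hB⟩ := isBigO_top.mp hq
  set c := |B| * (1 + ρ) ^ m + 1 with hc_def
  have hc : 0 < c := by positivity
  obtain ⟨n, hn⟩ := exists_pow_lt_of_lt_one (div_pos hε hc) ((div_lt_one hρ).mpr hRρ)
  set M := max m n
  let P : MvPolynomial (Fin d) ℝ := C c * (C (ρ⁻¹ ^ 2) * ∑ i, X i ^ 2) ^ M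
  have hP x : pev P x = c * (‖x‖ / ρ) ^ (2 * M) := by
    rw [pow_mul, div_pow, div_eq_inv_mul, EuclideanSpace.norm_sq_eq]
    simp [P, pev]
  refine ⟨P, fun x => by rw [hP]; positivity, fun x hx => ?_, fun x hx => ?_⟩
  · have hRρ1 : R / ρ ≤ 1 := (div_le_one hρ).mpr hRρ.le
    calc pev P x = c * (‖x‖ / ρ) ^ (2 * M) := hP x
      _ ≤ c * (R / ρ) ^ (2 * M) := by gcongr
      _ ≤ c * (R / ρ) ^ n := by
        gcongr c * ?_
        exact pow_le_pow_of_le_one (by positivity) hRρ1 (by omega)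
      _ < ε := by rwa [← lt_div_iff₀' hc]
  · have hu : 1 < ‖x‖ / ρ := (one_lt_div hρ).mpr hx
    have hgrowth : 1 + ‖x‖ ≤ (1 + ρ) * (‖x‖ / ρ) := by
      rw [add_mul, one_mul, mul_div_cancel₀ _ hρ.ne']
      linarith
    calc pev q x ≤ |B| * (1 + ‖x‖) ^ m := by
          have := hB x
          rw [Real.norm_eq_abs, norm_pow, Real.norm_of_nonneg (by positivity)] at this
          exact (le_abs_self _).trans (this.trans (by gcongr; exact le_abs_self B))
      _ ≤ |B| * ((1 + ρ) * (‖x‖ / ρ)) ^ m := by gcongr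
      _ < c * (‖x‖ / ρ) ^ m := by
        rw [mul_pow, ← mul_assoc, hc_def]
        have : 0 < (‖x‖ / ρ) ^ m := by positivity
        nlinarith
      _ ≤ c * (‖x‖ / ρ) ^ (2 * M) := by
        gcongr
        · exact hu.le
        · omega
      _ = pev P x := (hP x).symm

lemma exists_pev_separating_on_isCompact {S T : Set (EuclideanSpace ℝ (Fin d))}
    (hS : IsClosed S) (hT : IsClosed T) (hST : Disjoint S T)
    {K : Set (EuclideanSpace ℝ (Fin d))} (hK : IsCompact K) :
    ∃ q : MvPolynomial (Fin d) ℝ,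
      (∀ x ∈ K ∩ S, 1 / 2 < pev q x) ∧ ∀ x ∈ K ∩ T, pev q x < -1 / 2 := by
  obtain ⟨f, hfT, hfS, -⟩ := exists_continuous_zero_one_of_isClosed hT hS hST.symm
  obtain ⟨q, hq⟩ := exists_pev_near_of_isCompact (2 • f - 1) hK one_half_pos
  refine ⟨q, fun x ⟨hxK, hxS⟩ => ?_, fun x ⟨hxK, hxT⟩ => ?_⟩
  · have := abs_lt.mp (hq x hxK)
    simp only [ContinuousMap.sub_apply, ContinuousMap.smul_apply, hfS hxS] at this
    norm_num at this
    linarith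
  · have := abs_lt.mp (hq x hxK)
    simp only [ContinuousMap.sub_apply, ContinuousMap.smul_apply, hfT hxT] at this
    norm_num at this
    linarith

end

theorem separation_of_disjoint_closed_sets_general {d : ℕ}
    (S T : Set (EuclideanSpace ℝ (Fin d)))
    (hScpt : IsCompact S)
    (hTclosed : IsClosed T)
    (hdisj : S ∩ T = ∅) :
    ∃ p : MvPolynomial (Fin d) ℝ,
      (∀ x ∈ S, 0 < pev p x) ∧ (∀ x ∈ T, pev p x < 0) := by
  obtain ⟨R, hR, hSR⟩ := hScpt.isBounded.subset_closedBall_lt 0 0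
  obtain ⟨q, hqS, hqT⟩ := exists_pev_separating_on_isCompact hScpt.isClosed hTclosed
    (Set.disjoint_iff_inter_eq_empty.mpr hdisj) (isCompact_closedBall 0 (R + 1))
  obtain ⟨P, hP0, hPS, hPq⟩ := exists_pev_penalty q hR.le (lt_add_one R) one_half_pos
  refine ⟨q - P, fun x hxS => ?_, fun x hxT => ?_⟩
  · have hxR : ‖x‖ ≤ R := mem_closedBall_zero_iff.mp (hSR hxS)
    have hxK : x ∈ Metric.closedBall 0 (R + 1) := by rw [mem_closedBall_zero_iff]; linarith
    linarith [pev_sub q P x, hqS x ⟨hxK, hxS⟩, hPS x hxR]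
  · by_cases hxK : ‖x‖ ≤ R + 1
    · linarith [pev_sub q P x, hqT x ⟨mem_closedBall_zero_iff.mpr hxK, hxT⟩, hP0 x]
    · linarith [pev_sub q P x, hPq x (not_le.mp hxK)]

/-- **Proposition (Separation of disjoint closed sets).** Let `S ⊆ ℝ^d` be compact and
basic closed, and let `T ⊆ ℝ^d` be a closed semialgebraic set disjoint from `S`. Then there
is a polynomial `p` with `p > 0` on `S` and `p < 0` on `T`. -/
theorem separation_of_disjoint_closed_sets {d k : ℕ}
    (S T : Set (EuclideanSpace ℝ (Fin d)))
    (f : Fin k → MvPolynomial (Fin d) ℝ)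
    (hS : S = {x | ∀ i, 0 ≤ pev (f i) x})
    (hScpt : IsCompact S)
    (hTclosed : IsClosed T)
    (hTsa : IsClosedSemialg T)
    (hdisj : S ∩ T = ∅) :
    ∃ p : MvPolynomial (Fin d) ℝ,
      (∀ x ∈ S, 0 < pev p x) ∧ (∀ x ∈ T, pev p x < 0) :=
  separation_of_disjoint_closed_sets_general S T hScpt hTclosed hdisj
end

section
/- Let S ⊆ ℝ^d be a d-dimensional polytope, and for every facet F of S (i.e., every face of dimension d−1) let ℓ_F be an affine function on ℝ^d with ℓ_F ≥ 0 on S and F = S ∩ {ℓ_F = 0}. Then for every y ∈ S there exists a vertex x of S (i.e., an extreme point of S) such that ℓ_F(y) > 0 for every facet F of S with x ∉ F. -/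
open MvPolynomial Filter

/-
Let `T` be the set of points of `S` lying on every facet through `y`. Each facet is the zero
set of an affine function that is nonnegative on `S`, so `T` is an extreme subset of `S`;
it is compact and contains `y`, hence has an extreme point `x` (Krein–Milman), which is then
an extreme point of `S`. A facet missing `x` cannot contain `y`, so `ℓ_F(y) > 0` there.
-/

theorem IsPolyhedron.isClosed {d : ℕ} {S : Set (EuclideanSpace ℝ (Fin d))}
    (hS : IsPolyhedron S) : IsClosed S := by
  obtain ⟨k, l, rfl⟩ := hS
  rw [Set.ofPred_forall]
  exact isClosed_iInter fun i =>
    isClosed_le continuous_const (l i).continuous_of_finiteDimensional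

section ExtremeZeroSet

variable {𝕜 E : Type*} [Field 𝕜] [LinearOrder 𝕜] [IsStrictOrderedRing 𝕜]
  [AddCommGroup E] [Module 𝕜 E]

theorem AffineMap.eq_zero_of_mem_openSegment_of_nonneg (ℓ : E →ᵃ[𝕜] 𝕜) {x y z : E}
    (hx : 0 ≤ ℓ x) (hy : 0 ≤ ℓ y) (hz : z ∈ openSegment 𝕜 x y) (hℓz : ℓ z = 0) :
    ℓ x = 0 := by
  obtain ⟨a, b, ha, hb, hab, rfl⟩ := hz
  have hcombo : a * ℓ x + b * ℓ y = 0 := by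
    simpa only [Convex.combo_affine_apply hab, smul_eq_mul] using hℓz
  nlinarith [mul_nonneg ha.le hx, mul_nonneg hb.le hy]

theorem isExtreme_setOf_forall_eq_zero {ι : Type*} (ℓ : ι → E →ᵃ[𝕜] 𝕜) {S : Set E}
    (hℓ : ∀ i, ∀ x ∈ S, 0 ≤ ℓ i x) (I : Set ι) :
    IsExtreme 𝕜 S {x ∈ S | ∀ i ∈ I, ℓ i x = 0} where
  subset := Set.sep_subset _ _
  left_mem_of_mem_openSegment _ hx₁ _ hx₂ _ hz hseg :=
    ⟨hx₁, fun i hi => (ℓ i).eq_zero_of_mem_openSegment_of_nonneg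
      (hℓ i _ hx₁) (hℓ i _ hx₂) hseg (hz.2 i hi)⟩

end ExtremeZeroSet

theorem IsCompact.exists_mem_extremePoints_eq_zero_of_eq_zero {E ι : Type*} [AddCommGroup E]
    [Module ℝ E] [TopologicalSpace E] [T2Space E] [IsTopologicalAddGroup E]
    [ContinuousSMul ℝ E] [LocallyConvexSpace ℝ E] {S : Set E} (hS : IsCompact S)
    (ℓ : ι → E →ᵃ[ℝ] ℝ) (hcont : ∀ i, Continuous (ℓ i)) (hℓ : ∀ i, ∀ x ∈ S, 0 ≤ ℓ i x)
    {y : E} (hy : y ∈ S) :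
    ∃ x ∈ S.extremePoints ℝ, ∀ i, ℓ i y = 0 → ℓ i x = 0 := by
  set T := {x ∈ S | ∀ i ∈ {i | ℓ i y = 0}, ℓ i x = 0}
  have hTeq : T = S ∩ ⋂ i ∈ {i | ℓ i y = 0}, ℓ i ⁻¹' {0} := by
    ext x
    simp [T]
  have hT : IsCompact T := by
    refine hS.of_isClosed_subset ?_ (Set.sep_subset _ _)
    rw [hTeq]
    exact hS.isClosed.inter (isClosed_biInter fun i _ => isClosed_singleton.preimage (hcont i))
  obtain ⟨x, hx⟩ := hT.extremePoints_nonempty ⟨y, hy, fun _ hi => hi⟩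
  exact ⟨x, (isExtreme_setOf_forall_eq_zero ℓ hℓ _).extremePoints_subset_extremePoints hx,
    (extremePoints_subset hx).2⟩

theorem exists_vertex_positive_on_opposite_facets_general {d : ℕ}
    (S : Set (EuclideanSpace ℝ (Fin d)))
    (hpoly : IsPolyhedron S)
    (hbdd : Bornology.IsBounded S)
    (ℓ : Set (EuclideanSpace ℝ (Fin d)) → (EuclideanSpace ℝ (Fin d) →ᵃ[ℝ] ℝ))
    (hℓ : ∀ F : Set (EuclideanSpace ℝ (Fin d)), IsFace S F → sDim F = d - 1 →
      (∀ x ∈ S, 0 ≤ ℓ F x) ∧ F = {x ∈ S | ℓ F x = 0}) :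
    ∀ y ∈ S, ∃ x ∈ Set.extremePoints ℝ S,
      ∀ F : Set (EuclideanSpace ℝ (Fin d)), IsFace S F → sDim F = d - 1 →
        x ∉ F → 0 < ℓ F y := by
  intro y hy
  have hS : IsCompact S := Metric.isCompact_of_isClosed_isBounded hpoly.isClosed hbdd
  obtain ⟨x, hx, hxy⟩ := hS.exists_mem_extremePoints_eq_zero_of_eq_zero
    (ι := {F // IsFace S F ∧ sDim F = d - 1}) (fun F => ℓ F)
    (fun F => (ℓ F).continuous_of_finiteDimensional) (fun F => (hℓ F F.2.1 F.2.2).1) hy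
  refine ⟨x, hx, fun F hF hFdim hxF => ?_⟩
  obtain ⟨hnn, hFeq⟩ := hℓ F hF hFdim
  refine (hnn y hy).lt_of_ne fun hy0 => hxF ?_
  rw [hFeq]
  exact ⟨extremePoints_subset hx, hxy ⟨F, hF, hFdim⟩ hy0.symm⟩

/-- For every point `y` of a `d`-dimensional polytope `S ⊆ ℝ^d` there is a vertex `x` of
`S` such that `ℓ_F(y) > 0` for every facet `F` of `S` not containing `x`, where `ℓ_F` is
an affine function with `ℓ_F ≥ 0` on `S` and `F = S ∩ {ℓ_F = 0}`. -/
theorem exists_vertex_positive_on_opposite_facets {d : ℕ}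
    (S : Set (EuclideanSpace ℝ (Fin d)))
    (hpoly : IsPolyhedron S)
    (hbdd : Bornology.IsBounded S)
    (hdim : affineSpan ℝ S = ⊤)
    (ℓ : Set (EuclideanSpace ℝ (Fin d)) → (EuclideanSpace ℝ (Fin d) →ᵃ[ℝ] ℝ))
    (hℓ : ∀ F : Set (EuclideanSpace ℝ (Fin d)), IsFace S F → sDim F = d - 1 →
      (∀ x ∈ S, 0 ≤ ℓ F x) ∧ F = {x ∈ S | ℓ F x = 0}) :
    ∀ y ∈ S, ∃ x ∈ Set.extremePoints ℝ S,
      ∀ F : Set (EuclideanSpace ℝ (Fin d)), IsFace S F → sDim F = d - 1 →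
        x ∉ F → 0 < ℓ F y :=
  exists_vertex_positive_on_opposite_facets_general S hpoly hbdd ℓ hℓ
end
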